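/- Let B ⊂ A be an extension of finite dimensional algebras and set M = A/B (a B-B-bimodule). If Tor_i^B(M, M^{⊗_B j}) = 0 for all i, j ≥ 1, then Tor_i^B(A, A) = 0 for all i ≥ 1. -/

import Mathlib

noncomputable section

open scoped TensorProduct
open MulOpposite

section BTensorCore

variable (B : Type) [Ring B]

/-- The balancing relations for the tensor product over `B` of a right `B`-module `M`
and a left `B`-module `N`. -/
def BTrel (M N : Type) [AddCommGroup M] [AddCommGroup N] [Module Bᵐᵒᵖ M] [Module B N] :
    Submodule ℤ (TensorProduct ℤ M N) :=
  Submodule.span ℤ {x | ∃ (m : M) (b : B) (n : N),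
    x = (op b • m) ⊗ₜ[ℤ] n - m ⊗ₜ[ℤ] (b • n)}

/-- The balanced tensor product `M ⊗_B N` of a right `B`-module `M` and a left `B`-module `N`,
realized as a quotient of the tensor product of abelian groups. -/
def BTensor (M N : Type) [AddCommGroup M] [AddCommGroup N] [Module Bᵐᵒᵖ M] [Module B N] : Type :=
  TensorProduct ℤ M N ⧸ BTrel B M N

instance (M N : Type) [AddCommGroup M] [AddCommGroup N] [Module Bᵐᵒᵖ M] [Module B N] :
    AddCommGroup (BTensor B M N) :=
  inferInstanceAs (AddCommGroup (TensorProduct ℤ M N ⧸ BTrel B M N))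

variable {M N : Type} [AddCommGroup M] [AddCommGroup N] [Module Bᵐᵒᵖ M] [Module B N]

/-- The class of `m ⊗ n` in `M ⊗_B N`. -/
def BTensor.tmul (m : M) (n : N) : BTensor B M N :=
  Submodule.Quotient.mk (m ⊗ₜ[ℤ] n)

/-- Functoriality of `M ⊗_B -` in the second (left-module) variable. -/
def BTensor.map₂ (Mfix : Type) [AddCommGroup Mfix] [Module Bᵐᵒᵖ Mfix]
    {N' : Type} [AddCommGroup N'] [Module B N'] (f : N →ₗ[B] N') :
    BTensor B Mfix N →ₗ[ℤ] BTensor B Mfix N' :=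
  Submodule.mapQ _ _ (TensorProduct.map LinearMap.id f.toAddMonoidHom.toIntLinearMap) (by
    rw [BTrel, Submodule.span_le]
    rintro x ⟨m, b, n, rfl⟩
    show TensorProduct.map LinearMap.id f.toAddMonoidHom.toIntLinearMap
      ((op b • m) ⊗ₜ[ℤ] n - m ⊗ₜ[ℤ] (b • n)) ∈ BTrel B Mfix N'
    simp only [map_sub, TensorProduct.map_tmul,
      LinearMap.id_coe, id_eq, AddMonoidHom.coe_toIntLinearMap, LinearMap.toAddMonoidHom_coe]
    rw [map_smul]
    exact Submodule.subset_span ⟨m, b, f n, rfl⟩)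

/-- Functoriality of `- ⊗_B N` in the first (right-module) variable. -/
def BTensor.map₁ (Nfix : Type) [AddCommGroup Nfix] [Module B Nfix]
    {M' : Type} [AddCommGroup M'] [Module Bᵐᵒᵖ M'] (g : M →ₗ[Bᵐᵒᵖ] M') :
    BTensor B M Nfix →ₗ[ℤ] BTensor B M' Nfix :=
  Submodule.mapQ _ _ (TensorProduct.map g.toAddMonoidHom.toIntLinearMap LinearMap.id) (by
    rw [BTrel, Submodule.span_le]
    rintro x ⟨m, b, n, rfl⟩
    show TensorProduct.map g.toAddMonoidHom.toIntLinearMap LinearMap.id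
      ((op b • m) ⊗ₜ[ℤ] n - m ⊗ₜ[ℤ] (b • n)) ∈ BTrel B M' Nfix
    simp only [map_sub, TensorProduct.map_tmul,
      LinearMap.id_coe, id_eq, AddMonoidHom.coe_toIntLinearMap, LinearMap.toAddMonoidHom_coe]
    rw [map_smul]
    exact Submodule.subset_span ⟨g m, b, n, rfl⟩)

theorem BTensor.map₂_mk (Mfix : Type) [AddCommGroup Mfix] [Module Bᵐᵒᵖ Mfix]
    {N' : Type} [AddCommGroup N'] [Module B N'] (f : N →ₗ[B] N') (y : Mfix ⊗[ℤ] N) :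
    BTensor.map₂ B Mfix f (Submodule.Quotient.mk y) =
      Submodule.Quotient.mk
        (TensorProduct.map LinearMap.id f.toAddMonoidHom.toIntLinearMap y) :=
  by rfl

theorem BTensor.map₁_mk (Nfix : Type) [AddCommGroup Nfix] [Module B Nfix]
    {M' : Type} [AddCommGroup M'] [Module Bᵐᵒᵖ M'] (g : M →ₗ[Bᵐᵒᵖ] M') (y : M ⊗[ℤ] Nfix) :
    BTensor.map₁ B Nfix g (Submodule.Quotient.mk y) =
      Submodule.Quotient.mk
        (TensorProduct.map g.toAddMonoidHom.toIntLinearMap LinearMap.id y) :=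
  by rfl

end BTensorCore

section LeftRight

variable (B : Type) [Ring B] (Γ : Type) [Ring Γ]
variable (M N : Type) [AddCommGroup M] [AddCommGroup N] [Module Bᵐᵒᵖ M] [Module B N]

section Left
variable [Module Γ M] [SMulCommClass Γ Bᵐᵒᵖ M]

/-- left scalar multiplication on `M`, as a right-`B`-linear map. -/
def lsmulRightLinear (g : Γ) : M →ₗ[Bᵐᵒᵖ] M where
  toFun := (g • ·)
  map_add' := smul_add g
  map_smul' := fun b m => by exact smul_comm g b m

instance BTensor.instSMulLeft : SMul Γ (BTensor B M N) :=
  ⟨fun g => BTensor.map₁ B N (lsmulRightLinear B Γ M g)⟩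

instance BTensor.leftModule : Module Γ (BTensor B M N) := by
  refine Function.Surjective.module Γ
    (⟨⟨(Submodule.Quotient.mk : TensorProduct ℤ M N → BTensor B M N), rfl⟩, fun x y => rfl⟩)
    (Submodule.Quotient.mk_surjective _) ?_
  intro g y
  show Submodule.Quotient.mk (g • y) = BTensor.map₁ B N (lsmulRightLinear B Γ M g)
    (Submodule.Quotient.mk y)
  rw [BTensor.map₁_mk]
  congr 1

end Left

section Right
variable [Module Γᵐᵒᵖ N] [SMulCommClass B Γᵐᵒᵖ N]

/-- right scalar multiplication on `N`, as a left-`B`-linear map. -/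
def rsmulLeftLinear (g : Γᵐᵒᵖ) : N →ₗ[B] N where
  toFun := (g • ·)
  map_add' := smul_add g
  map_smul' := fun b n => by exact (smul_comm b g n).symm

instance BTensor.instSMulRight : SMul Γᵐᵒᵖ (BTensor B M N) :=
  ⟨fun g => BTensor.map₂ B M (rsmulLeftLinear B Γ N g)⟩

instance BTensor.rightModule : Module Γᵐᵒᵖ (BTensor B M N) := by
  refine Function.Surjective.module Γᵐᵒᵖ
    (⟨⟨fun (y : N ⊗[ℤ] M) => (Submodule.Quotient.mk (TensorProduct.comm ℤ N M y) :
        BTensor B M N), by simp; rfl⟩, fun x y => by simp; rfl⟩) ?_ ?_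
  · intro x
    obtain ⟨y, rfl⟩ := Submodule.Quotient.mk_surjective _ x
    exact ⟨(TensorProduct.comm ℤ N M).symm y, by
      show Submodule.Quotient.mk ((TensorProduct.comm ℤ N M) ((TensorProduct.comm ℤ N M).symm y)) = _
      simp⟩
  · intro g y
    show Submodule.Quotient.mk ((TensorProduct.comm ℤ N M) (g • y)) =
      BTensor.map₂ B M (rsmulLeftLinear B Γ N g)
        (Submodule.Quotient.mk ((TensorProduct.comm ℤ N M) y))
    rw [BTensor.map₂_mk]
    congr 1
    induction y using TensorProduct.induction_on with
    | zero => simp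
    | tmul n m =>
        simp [TensorProduct.smul_tmul', rsmulLeftLinear, TensorProduct.comm_tmul]
    | add x y hx hy => simp [smul_add, hx, hy]

end Right

instance BTensor.smulCommClass [Module Γ M] [SMulCommClass Γ Bᵐᵒᵖ M]
    [Module Γᵐᵒᵖ N] [SMulCommClass B Γᵐᵒᵖ N] :
    SMulCommClass Γ Γᵐᵒᵖ (BTensor B M N) := by
  constructor
  intro g og x
  obtain ⟨y, rfl⟩ := Submodule.Quotient.mk_surjective _ x
  show (BTensor.map₁ B N (lsmulRightLinear B Γ M g)) ((BTensor.map₂ B M (rsmulLeftLinear B Γ N og)) _)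
    = (BTensor.map₂ B M (rsmulLeftLinear B Γ N og)) ((BTensor.map₁ B N (lsmulRightLinear B Γ M g)) _)
  rw [BTensor.map₂_mk, BTensor.map₁_mk, BTensor.map₁_mk, BTensor.map₂_mk]
  congr 1
  induction y using TensorProduct.induction_on with
  | zero => simp
  | tmul m n => simp [lsmulRightLinear, rsmulLeftLinear]
  | add x y hx hy => simp [hx, hy]

end LeftRight

section Bimod

variable (B : Type) [Ring B]

/-- A `B`-`B`-bimodule, packaged. -/
structure BBimod : Type 1 where
  X : Type
  [addcg : AddCommGroup X]
  [left : Module B X]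
  [right : Module Bᵐᵒᵖ X]
  [comm : SMulCommClass B Bᵐᵒᵖ X]

attribute [instance] BBimod.addcg BBimod.left BBimod.right BBimod.comm

variable {B}

/-- tensor product of bimodules over `B`. -/
def BBimod.tensor (M N : BBimod B) : BBimod B where
  X := BTensor B M.X N.X

/-- `M.pow j` is the tensor power `M^{⊗_B (j+1)}`. -/
def BBimod.pow (M : BBimod B) : ℕ → BBimod B
  | 0 => M
  | (j + 1) => M.tensor (M.pow j)

end Bimod

section Tor

variable (R : Type) [Ring R]

/-- `P`, `d`, `ε` form a projective resolution of the left `R`-module `N`. -/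
def IsProjResolution (N : Type) [AddCommGroup N] [Module R N]
    (P : ℕ → ModuleCat R) (d : ∀ i, P (i + 1) ⟶ P i) (ε : P 0 ⟶ ModuleCat.of R N) : Prop :=
  (∀ i, Module.Projective R (P i)) ∧ Function.Surjective ε ∧
    LinearMap.range (d 0).hom = LinearMap.ker ε.hom ∧
    ∀ i, LinearMap.range (d (i + 1)).hom = LinearMap.ker (d i).hom

/-- `Tor_i^R(M, N) = 0` for all `i ≥ 1`: for every projective resolution `P⬝` of `N`, the
complex `M ⊗_R P⬝` is exact in all positive degrees. -/
def TorVanishesPos (M : Type) [AddCommGroup M] [Module Rᵐᵒᵖ M]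
    (N : Type) [AddCommGroup N] [Module R N] : Prop :=
  ∀ (P : ℕ → ModuleCat R) (d : ∀ i, P (i + 1) ⟶ P i) (ε : P 0 ⟶ ModuleCat.of R N),
    IsProjResolution R N P d ε →
    ∀ i, LinearMap.range (BTensor.map₂ R M (d (i + 1)).hom) =
      LinearMap.ker (BTensor.map₂ R M (d i).hom)

end Tor

/-!
Let `P → A` be a projective resolution of `A` over `B`, and lift `1 ∈ A` to `P₀`, giving
`f₀ : B → P₀`. Because `B → A` is injective, the cone `P₀ ← P₁ × B ← P₂ ← P₃ ← ⋯` with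
differentials `(p, b) ↦ d p + f₀ b` and `p ↦ (d p, 0)` is a projective resolution of `M = A/B`.
It agrees with `P` in degrees `≠ 1`, so `Tor_i^B(M, M) = 0` makes `M ⊗_B P` exact in positive
degrees. Finally, `0 → B → A → M → 0` is exact as right `B`-modules and `B ⊗_B Pᵢ = Pᵢ` embeds in
`A ⊗_B Pᵢ` since `Pᵢ` is projective: a cycle of `A ⊗_B P` maps to a boundary of `M ⊗_B P`; after
subtracting a lift of it, what is left is `1 ⊗ p` with `p` a cycle, hence a boundary, of `P`.
-/

namespace BTensor

variable {B : Type} [Ring B]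
variable {W W' : Type} [AddCommGroup W] [Module Bᵐᵒᵖ W] [AddCommGroup W'] [Module Bᵐᵒᵖ W']
variable {X Y Z : Type} [AddCommGroup X] [Module B X] [AddCommGroup Y] [Module B Y]
  [AddCommGroup Z] [Module B Z]

theorem mk_surjective : Function.Surjective
    (Submodule.Quotient.mk : W ⊗[ℤ] X → BTensor B W X) :=
  Submodule.Quotient.mk_surjective _

@[ext]
theorem hom_ext {V : Type} [AddCommGroup V] {f g : BTensor B W X →ₗ[ℤ] V}
    (h : ∀ w x, f (tmul B w x) = g (tmul B w x)) : f = g :=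
  Submodule.linearMap_qext _ (TensorProduct.ext' h)

@[simp]
theorem map₂_tmul (f : X →ₗ[B] Y) (w : W) (x : X) :
    map₂ B W f (tmul B w x) = tmul B w (f x) :=
  rfl

@[simp]
theorem map₁_tmul (g : W →ₗ[Bᵐᵒᵖ] W') (w : W) (x : X) :
    map₁ B X g (tmul B w x) = tmul B (g w) x :=
  rfl

@[simp]
theorem tmul_zero (w : W) : tmul B w (0 : X) = 0 := by
  rw [tmul, TensorProduct.tmul_zero]
  rfl

@[simp]
theorem zero_tmul (x : X) : tmul B (0 : W) x = 0 := by
  rw [tmul, TensorProduct.zero_tmul]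
  rfl

theorem tmul_smul (w : W) (b : B) (x : X) : tmul B w (b • x) = tmul B (op b • w) x :=
  ((Submodule.Quotient.eq (BTrel B W X)).mpr (Submodule.subset_span ⟨w, b, x, rfl⟩)).symm

theorem map₂_comp (g : Y →ₗ[B] Z) (f : X →ₗ[B] Y) :
    map₂ B W (g ∘ₗ f) = map₂ B W g ∘ₗ map₂ B W f := by
  ext; rfl

@[simp]
theorem map₂_zero : map₂ B W (0 : X →ₗ[B] Y) = 0 := by
  ext; simp

@[simp]
theorem map₂_id : map₂ B W (LinearMap.id : X →ₗ[B] X) = LinearMap.id := by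
  ext; rfl

theorem map₂_map₁ (g : W →ₗ[Bᵐᵒᵖ] W') (f : X →ₗ[B] Y) (t : BTensor B W X) :
    map₂ B W' f (map₁ B X g t) = map₁ B Y g (map₂ B W f t) := by
  change (map₂ B W' f ∘ₗ map₁ B X g) t = (map₁ B Y g ∘ₗ map₂ B W f) t
  congr 1
  ext; rfl

theorem map₁_surjective (g : W →ₗ[Bᵐᵒᵖ] W') (hg : Function.Surjective g) :
    Function.Surjective (map₁ B X g) := by
  intro t
  obtain ⟨t, rfl⟩ := mk_surjective t
  obtain ⟨s, rfl⟩ := LinearMap.rTensor_surjective X (g := g.toAddMonoidHom.toIntLinearMap) hg t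
  exact ⟨Submodule.Quotient.mk s, rfl⟩

theorem range_map₂_le_ker {f : X →ₗ[B] Y} {g : Y →ₗ[B] Z} (h : g ∘ₗ f = 0) :
    LinearMap.range (map₂ B W f) ≤ LinearMap.ker (map₂ B W g) := by
  rintro _ ⟨t, rfl⟩
  rw [LinearMap.mem_ker, ← LinearMap.comp_apply, ← map₂_comp, h, map₂_zero, LinearMap.zero_apply]

variable (B X) in
def tmulLeft (w : W) : X →ₗ[ℤ] BTensor B W X :=
  (BTrel B W X).mkQ ∘ₗ TensorProduct.mk ℤ W X w

@[simp]
theorem tmulLeft_apply (w : W) (x : X) : tmulLeft B X w x = tmul B w x :=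
  rfl

section Quotient

variable {T : Type} [AddCommGroup T] [Module Bᵐᵒᵖ T]

theorem BTrel_le_map_rTensor (π : W →ₗ[Bᵐᵒᵖ] T) (hπ : Function.Surjective π) :
    BTrel B T X ≤ (BTrel B W X).map (LinearMap.rTensor X π.toAddMonoidHom.toIntLinearMap) := by
  refine Submodule.span_le.mpr ?_
  rintro _ ⟨t, b, x, rfl⟩
  obtain ⟨w, rfl⟩ := hπ t
  refine ⟨_, Submodule.subset_span ⟨w, b, x, rfl⟩, ?_⟩
  simp [map_smul]

theorem ker_map₁_eq_range_tmulLeft (w : W) (π : W →ₗ[Bᵐᵒᵖ] T) (hπ : Function.Surjective π)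
    (hexact : Function.Exact (fun b : B => op b • w) π) :
    LinearMap.ker (map₁ B X π) = LinearMap.range (tmulLeft B X w) := by
  let ιw : B →ₗ[ℤ] W :=
    { toFun := fun b => op b • w
      map_add' := by simp [add_smul]
      map_smul' := fun m b => by rw [op_smul, smul_assoc, RingHom.id_apply] }
  let πZ : W →ₗ[ℤ] T := π.toAddMonoidHom.toIntLinearMap
  have range_ιw (u : B ⊗[ℤ] X) :
      (Submodule.Quotient.mk (LinearMap.rTensor X ιw u) : BTensor B W X) ∈
        LinearMap.range (tmulLeft B X w) := by
    induction u using TensorProduct.induction_on with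
    | zero => exact ⟨0, by rw [map_zero, map_zero]; rfl⟩
    | tmul b x => exact ⟨b • x, tmul_smul w b x⟩
    | add u v hu hv => rw [map_add, Submodule.Quotient.mk_add]; exact add_mem hu hv
  refine le_antisymm (fun t ht => ?_) ?_
  -- Lift the balancing relations of `T ⊗ X` along `π`, then use right exactness of `- ⊗[ℤ] X`.
  · obtain ⟨t, rfl⟩ := mk_surjective t
    have ht : LinearMap.rTensor X πZ t ∈ BTrel B T X := (Submodule.Quotient.mk_eq_zero _).mp ht
    obtain ⟨s, hs, hst⟩ := BTrel_le_map_rTensor π hπ ht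
    have hexactZ : Function.Exact ιw πZ := hexact
    obtain ⟨u, hu⟩ := (rTensor_exact X hexactZ hπ (t - s)).mp
      (by rw [map_sub, hst, sub_self])
    have : (Submodule.Quotient.mk t : BTensor B W X) = Submodule.Quotient.mk (t - s) := by
      rw [Submodule.Quotient.eq, sub_sub_cancel]
      exact hs
    rw [this, ← hu]
    exact range_ιw u
  · rintro _ ⟨x, rfl⟩
    rw [LinearMap.mem_ker, tmulLeft_apply, map₁_tmul, (hexact w).mpr ⟨1, by simp⟩, zero_tmul]

end Quotient

variable (W) in
def toFinsupp (I : Type) : BTensor B W (I →₀ B) →ₗ[ℤ] (I →₀ W) :=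
  (BTrel B W (I →₀ B)).liftQ
    (TensorProduct.lift <| LinearMap.mk₂ ℤ (fun w f => f.mapRange (fun b => op b • w) (by simp))
      (fun w w' f => Finsupp.ext fun i => by
        simp only [Finsupp.mapRange_apply, Finsupp.add_apply, smul_add])
      (fun m w f => Finsupp.ext fun i => by
        simp only [Finsupp.mapRange_apply, Finsupp.smul_apply]
        exact smul_comm _ m w)
      (fun w f f' => Finsupp.ext fun i => by
        simp only [Finsupp.mapRange_apply, Finsupp.add_apply, op_add, add_smul])
      (fun m w f => Finsupp.ext fun i => by
        simp only [Finsupp.mapRange_apply, Finsupp.smul_apply, op_smul, smul_assoc]))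
    (Submodule.span_le.mpr <| by
      rintro _ ⟨w, b, f, rfl⟩
      refine LinearMap.mem_ker.mpr ?_
      show TensorProduct.lift _ ((op b • w) ⊗ₜ[ℤ] f - w ⊗ₜ[ℤ] (b • f)) = 0
      rw [map_sub, sub_eq_zero, TensorProduct.lift.tmul, TensorProduct.lift.tmul]
      ext
      simp [mul_smul])

@[simp]
theorem toFinsupp_tmul {I : Type} (w : W) (f : I →₀ B) (i : I) :
    toFinsupp W I (tmul B w f) i = op (f i) • w :=
  rfl

theorem tmulLeft_injective (w : W) (hw : Function.Injective fun b : B => op b • w)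
    [Module.Projective B X] : Function.Injective (tmulLeft B X w) := by
  -- `X` is a retract of `X →₀ B`, on which `toFinsupp` detects vanishing.
  have hfree (f : X →₀ B) (hf : tmul B w f = 0) : f = 0 := by
    ext y
    apply hw
    simpa using DFunLike.congr_fun (congrArg (toFinsupp W X) hf) y
  obtain ⟨s, hs⟩ := Module.projective_def.mp (inferInstance : Module.Projective B X)
  refine (injective_iff_map_eq_zero _).mpr fun x hx => ?_
  have : s x = 0 := hfree (s x) (by rw [← map₂_tmul s w x, ← tmulLeft_apply, hx, map_zero])
  rw [← hs x, this, map_zero]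

end BTensor

section Complex

variable {B : Type} [Ring B] {P : ℕ → ModuleCat B} {d : ∀ i, P (i + 1) ⟶ P i}

variable (B) in
def TensorComplexExact (T : Type) [AddCommGroup T] [Module Bᵐᵒᵖ T]
    (P : ℕ → ModuleCat B) (d : ∀ i, P (i + 1) ⟶ P i) : Prop :=
  ∀ i, LinearMap.range (BTensor.map₂ B T (d (i + 1)).hom) =
    LinearMap.ker (BTensor.map₂ B T (d i).hom)

theorem comp_eq_zero_of_range_eq_ker
    (hP : ∀ i, LinearMap.range (d (i + 1)).hom = LinearMap.ker (d i).hom) (i : ℕ) :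
    (d i).hom ∘ₗ (d (i + 1)).hom = 0 :=
  (LinearMap.exact_iff.mpr (hP i).symm).linearMap_comp_eq_zero

open BTensor in
theorem TensorComplexExact.of_quotient {W T : Type} [AddCommGroup W] [Module Bᵐᵒᵖ W]
    [AddCommGroup T] [Module Bᵐᵒᵖ T] (w : W) (π : W →ₗ[Bᵐᵒᵖ] T) (hπ : Function.Surjective π)
    (hexact : Function.Exact (fun b : B => op b • w) π)
    (hw : Function.Injective fun b : B => op b • w)
    (hproj : ∀ i, Module.Projective B (P i))
    (hP : ∀ i, LinearMap.range (d (i + 1)).hom = LinearMap.ker (d i).hom)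
    (hT : TensorComplexExact B T P d) : TensorComplexExact B W P d := by
  have hdd := comp_eq_zero_of_range_eq_ker hP
  intro i
  refine le_antisymm (range_map₂_le_ker (hdd i)) fun x hx => ?_
  rw [LinearMap.mem_ker] at hx
  obtain ⟨z, hz⟩ : map₁ B _ π x ∈ LinearMap.range (map₂ B T (d (i + 1)).hom) := by
    rw [hT i, LinearMap.mem_ker, map₂_map₁, hx, map_zero]
  obtain ⟨y, rfl⟩ := map₁_surjective π hπ z
  obtain ⟨p, hp⟩ :
      x - map₂ B W (d (i + 1)).hom y ∈ LinearMap.range (tmulLeft B (P (i + 1)) w) := by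
    rw [← ker_map₁_eq_range_tmulLeft w π hπ hexact, LinearMap.mem_ker, map_sub, ← map₂_map₁, hz,
      sub_self]
  obtain ⟨q, rfl⟩ : p ∈ LinearMap.range (d (i + 1)).hom := by
    rw [hP i, LinearMap.mem_ker]
    have := hproj i
    apply tmulLeft_injective w hw
    rw [map_zero, tmulLeft_apply, ← map₂_tmul, ← tmulLeft_apply, hp, map_sub, hx,
      ← LinearMap.comp_apply, ← map₂_comp, hdd i, map₂_zero, LinearMap.zero_apply, sub_zero]
  exact ⟨y + tmul B w q, by rw [map_add, map₂_tmul, ← tmulLeft_apply, hp, add_sub_cancel]⟩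

section Cone

variable (P) (Q : Type) [AddCommGroup Q] [Module B Q]

def coneObj : ℕ → ModuleCat B
  | 0 => P 0
  | 1 => ModuleCat.of B (P 1 × Q)
  | n + 2 => P (n + 2)

variable (d) {Q} (f₀ : Q →ₗ[B] P 0)

def coneDiff : ∀ i, coneObj P Q (i + 1) ⟶ coneObj P Q i
  | 0 => ModuleCat.ofHom ((d 0).hom.coprod f₀)
  | 1 => ModuleCat.ofHom (LinearMap.inl B (P 1) Q ∘ₗ (d 1).hom)
  | n + 2 => d (n + 2)

variable {P d}

open BTensor in
theorem TensorComplexExact.of_cone {T : Type} [AddCommGroup T] [Module Bᵐᵒᵖ T]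
    (hdd : ∀ i, (d i).hom ∘ₗ (d (i + 1)).hom = 0)
    (hcone : TensorComplexExact B T (coneObj P Q) (coneDiff P d f₀)) :
    TensorComplexExact B T P d := by
  intro i
  refine le_antisymm (range_map₂_le_ker (hdd i)) fun x hx => ?_
  rw [LinearMap.mem_ker] at hx
  match i with
  | 0 =>
    have hc : LinearMap.range (map₂ B T (LinearMap.inl B (P 1) Q ∘ₗ (d 1).hom)) =
        LinearMap.ker (map₂ B T ((d 0).hom.coprod f₀)) := hcone 0
    obtain ⟨y, hy⟩ : map₂ B T (LinearMap.inl B (P 1) Q) x ∈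
        LinearMap.range (map₂ B T (LinearMap.inl B (P 1) Q ∘ₗ (d 1).hom)) := by
      rw [hc, LinearMap.mem_ker, ← LinearMap.comp_apply, ← map₂_comp, LinearMap.coprod_inl, hx]
    refine ⟨y, ?_⟩
    have := congrArg (map₂ B T (LinearMap.fst B (P 1) Q)) hy
    rwa [← LinearMap.comp_apply, ← LinearMap.comp_apply (map₂ B T _), ← map₂_comp, ← map₂_comp,
      ← LinearMap.comp_assoc, LinearMap.fst_comp_inl, LinearMap.id_comp,
      map₂_id, LinearMap.id_apply] at this
  | 1 =>
    have hc : LinearMap.range (map₂ B T (d 2).hom) =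
        LinearMap.ker (map₂ B T (LinearMap.inl B (P 1) Q ∘ₗ (d 1).hom)) := hcone 1
    rw [hc, LinearMap.mem_ker, map₂_comp, LinearMap.comp_apply, hx, map_zero]
  | n + 2 => exact (hcone (n + 2)).ge hx

theorem isProjResolution_cone {N T : Type} [AddCommGroup N] [Module B N] [AddCommGroup T]
    [Module B T] {ε : P 0 ⟶ ModuleCat.of B N} (hres : IsProjResolution B N P d ε)
    [Module.Projective B Q] {g : Q →ₗ[B] N} (hg : Function.Injective g) {π : N →ₗ[B] T}
    (hπ : Function.Surjective π) (hexact : Function.Exact g π) (hf₀ : ε.hom ∘ₗ f₀ = g) :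
    IsProjResolution B T (coneObj P Q) (coneDiff P d f₀) (ModuleCat.ofHom (π ∘ₗ ε.hom)) := by
  obtain ⟨hproj, hε, hexact₀, hP⟩ := hres
  have hεd : ε.hom ∘ₗ (d 0).hom = 0 :=
    (LinearMap.exact_iff.mpr hexact₀.symm).linearMap_comp_eq_zero
  refine ⟨?_, hπ.comp hε, ?_, ?_⟩
  · rintro (_ | _ | n)
    · exact hproj 0
    · have := hproj 1
      exact inferInstanceAs (Module.Projective B (P 1 × Q))
    · exact hproj (n + 2)
  · change LinearMap.range ((d 0).hom.coprod f₀) = LinearMap.ker (π ∘ₗ ε.hom)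
    rw [LinearMap.range_coprod, hexact₀, sup_comm, ← Submodule.comap_map_eq,
      ← LinearMap.range_comp, hf₀, ← LinearMap.exact_iff.mp hexact, LinearMap.ker_comp]
  · rintro (_ | _ | n)
    · change LinearMap.range (LinearMap.inl B (P 1) Q ∘ₗ (d 1).hom) =
        LinearMap.ker ((d 0).hom.coprod f₀)
      refine le_antisymm ?_ fun ⟨p, q⟩ hpq => ?_
      · rw [LinearMap.range_comp, Submodule.map_le_iff_le_comap, hP 0]
        intro p hp
        simpa using hp
      · rw [LinearMap.mem_ker, LinearMap.coprod_apply] at hpq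
        have hq : q = 0 := hg <| by
          simpa [← hf₀, ← LinearMap.comp_apply ε.hom (d 0).hom, hεd] using congrArg ε.hom hpq
        subst hq
        obtain ⟨r, rfl⟩ : p ∈ LinearMap.range (d 1).hom := by simpa [hP 0] using hpq
        exact ⟨r, rfl⟩
    · change LinearMap.range (d 2).hom = LinearMap.ker (LinearMap.inl B (P 1) Q ∘ₗ (d 1).hom)
      rw [LinearMap.ker_comp_of_ker_eq_bot _ (LinearMap.ker_eq_bot.mpr LinearMap.inl_injective),
        hP 1]
    · exact hP (n + 2)

end Cone

end Complex

theorem statement1_general (k : Type) [Field k]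
    (A B : Type) [Ring A] [Ring B] [Algebra k A] [Algebra k B]
    (ι : B →ₐ[k] A) (hι : Function.Injective ι)
    [Module B A] [Module Bᵐᵒᵖ A]
    (hBA : ∀ (b : B) (a : A), b • a = ι b * a)
    (hAB : ∀ (b : B) (a : A), (op b) • a = a * ι b)
    (M : BBimod B) (π : A →+ M.X)
    (hπ : Function.Surjective π)
    (hπL : ∀ (b : B) (a : A), π (ι b * a) = b • π a)
    (hπR : ∀ (b : B) (a : A), π (a * ι b) = (op b) • π a)
    (hker : ∀ a : A, π a = 0 ↔ ∃ b : B, ι b = a)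
    (hTor : ∀ j : ℕ, TorVanishesPos B M.X (M.pow j).X) :
    TorVanishesPos B A A := by
  intro P d ε hres
  have hexact : Function.Exact ι π := fun a => (hker a).trans Set.mem_range.symm
  let πL : A →ₗ[B] M.X := { π with map_smul' := fun b a => by simp [hBA, hπL] }
  let πR : A →ₗ[Bᵐᵒᵖ] M.X :=
    { π with
      map_smul' := fun c a => by
        change π (c • a) = c • π a
        rw [← op_unop c, hAB, hπR] }
  let g : B →ₗ[B] A := LinearMap.toSpanSingleton B A 1
  have hleft : ⇑g = ι := funext fun b => by simp [g, hBA]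
  have hright : (fun b : B => op b • (1 : A)) = ι := funext fun b => by rw [hAB, one_mul]
  obtain ⟨f₀, hf₀⟩ := Module.projective_lifting_property ε.hom g hres.2.1
  have hcone := isProjResolution_cone f₀ hres (π := πL) (by rwa [hleft]) hπ (by rwa [hleft]) hf₀
  have hM : TensorComplexExact B M.X P d :=
    .of_cone f₀ (comp_eq_zero_of_range_eq_ker hres.2.2.2) (hTor 0 _ _ _ hcone)
  exact TensorComplexExact.of_quotient 1 πR hπ (by rwa [hright]) (by rwa [hright]) hres.1
    hres.2.2.2 hM

/-- For an extension `B ⊂ A` of finite dimensional algebras (encoded by an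
injective algebra map `ι : B → A` together with the short exact sequence of
`B`-`B`-bimodules `0 → B → A → M → 0`, `M = A/B`), if
`Tor_i^B(M, M^{⊗_B j}) = 0` for all `i, j ≥ 1` then `Tor_i^B(A, A) = 0` for all `i ≥ 1`. -/
theorem statement1 (k : Type) [Field k]
    (A B : Type) [Ring A] [Ring B] [Algebra k A] [Algebra k B]
    [FiniteDimensional k A] [FiniteDimensional k B]
    (ι : B →ₐ[k] A) (hι : Function.Injective ι)
    [Module B A] [Module Bᵐᵒᵖ A]
    (hBA : ∀ (b : B) (a : A), b • a = ι b * a)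
    (hAB : ∀ (b : B) (a : A), (op b) • a = a * ι b)
    (M : BBimod B) (π : A →+ M.X)
    (hπ : Function.Surjective π)
    (hπL : ∀ (b : B) (a : A), π (ι b * a) = b • π a)
    (hπR : ∀ (b : B) (a : A), π (a * ι b) = (op b) • π a)
    (hker : ∀ a : A, π a = 0 ↔ ∃ b : B, ι b = a)
    (hTor : ∀ j : ℕ, TorVanishesPos B M.X (M.pow j).X) :
    TorVanishesPos B A A :=
  statement1_general k A B ι hι hBA hAB M π hπ hπL hπR hker hTor
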